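/- arXiv:2409.13096 — 3 statements merged into one kernel-verified Lean document; each statement's English description precedes it below -/
import Mathlib

section
/- Let 𝒟 be a distribution on 𝔽₂ⁿ and ℓ ≥ 2. Let 𝒟_{⊕ℓ} be the distribution on (𝔽₂^ℓ)ⁿ obtained by sampling x ∼ 𝒟 and then, independently for each i ∈ [n], sampling y⁽ⁱ⁾ uniformly among strings in 𝔽₂^ℓ whose coordinates sum to x_i. Then for every set R of coordinates of (𝔽₂^ℓ)ⁿ (viewed as [nℓ]) and every assignment r ∈ 𝔽₂^{|R|}, Pr_{y∼𝒟_{⊕ℓ}}[y_R = r] ≤ 2^{−|R|(1−1/ℓ)}. -/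
/-!
Conditioned on the block parities `x`, the blocks of `y` are independent and each is uniform on
the `2^(ℓ-1)` strings of parity `xᵢ`. If `k` coordinates of a block are prescribed, a string of
the right parity is determined by its values off those `k` coordinates and one further
coordinate, so at most `2^(ℓ-k-1)` of them remain when `k < ℓ` and at most one when `k = ℓ`;
either way the conditional probability is at most `2^(-k(1-1/ℓ))`. Multiplying over the blocks
and averaging over `x` gives the bound.
-/

open Finset
open scoped Classical

/-- A probability distribution given by a weight function on a finite type. -/
def IsDist {α : Type*} [Fintype α] (μ : α → ℝ) : Prop :=
  (∀ a, 0 ≤ μ a) ∧ ∑ a, μ a = 1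

/-- Probability of an event under a weight function. -/
noncomputable def pr {α : Type*} [Fintype α] (μ : α → ℝ) (P : α → Prop) : ℝ :=
  ∑ a ∈ univ.filter P, μ a

/-- 𝔽₂-valued parity χ_S. -/
def chi2 {ι : Type*} (S : Finset ι) (x : ι → ZMod 2) : ZMod 2 :=
  ∑ i ∈ S, x i

/-- ±1-valued parity χ_S. -/
noncomputable def chi {ι : Type*} (S : Finset ι) (x : ι → ZMod 2) : ℝ :=
  ∏ i ∈ S, (-1 : ℝ) ^ (x i).val

/-- Blockwise parity: (𝔽₂^ℓ)ⁿ → 𝔽₂ⁿ. -/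
def blockPar {n ℓ : ℕ} (y : Fin n × Fin ℓ → ZMod 2) : Fin n → ZMod 2 :=
  fun i => ∑ j, y (i, j)

/-- The parity-substituted distribution 𝒟_{⊕ℓ}: each block is uniform among the
2^(ℓ-1) strings with the prescribed block parity. -/
noncomputable def parSub {n ℓ : ℕ} (μ : (Fin n → ZMod 2) → ℝ)
    (y : Fin n × Fin ℓ → ZMod 2) : ℝ :=
  μ (blockPar y) / 2 ^ ((ℓ - 1) * n)

/-- A function has Fourier degree at most `D`. -/
noncomputable def HasDegLE {ι : Type*} [Fintype ι] (h : (ι → ZMod 2) → ℝ) (D : ℕ) : Prop :=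
  ∃ c : Finset ι → ℝ, (∀ S, c S ≠ 0 → S.card ≤ D) ∧
    ∀ x, h x = ∑ S : Finset ι, c S * chi S x

/-- Binary decision trees querying coordinates indexed by `ι`. -/
inductive DTree (ι : Type*) where
  | leaf : Bool → DTree ι
  | node : ι → DTree ι → DTree ι → DTree ι

namespace DTree

variable {ι : Type*}

/-- 𝔽₂-valued evaluation. -/
def eval : DTree ι → (ι → ZMod 2) → ZMod 2
  | leaf b, _ => if b then 1 else 0
  | node i L R, x => if x i = 1 then eval R x else eval L x

/-- ±1-valued evaluation (0 ↦ 1, 1 ↦ -1). -/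
noncomputable def evalpm (T : DTree ι) (x : ι → ZMod 2) : ℝ :=
  if eval T x = 0 then 1 else -1

/-- Number of leaves. -/
def size : DTree ι → ℕ
  | leaf _ => 1
  | node _ L R => size L + size R

/-- Depth. -/
def depth : DTree ι → ℕ
  | leaf _ => 0
  | node _ L R => max (depth L) (depth R) + 1

/-- `Truncation d T T'` : `T'` is obtained from `T` by truncating every path at
depth `d`, replacing the cut subtrees by arbitrary leaves. -/
inductive Truncation : ℕ → DTree ι → DTree ι → Prop
  | leaf (d : ℕ) (b : Bool) : Truncation d (leaf b) (leaf b)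
  | cut (T : DTree ι) (b : Bool) : Truncation 0 T (leaf b)
  | node (d : ℕ) (i : ι) (L R L' R' : DTree ι) :
      Truncation d L L' → Truncation d R R' →
      Truncation (d + 1) (node i L R) (node i L' R')

/-- The collection of sets of variables queried along individual root-to-leaf paths. -/
def pathVars [DecidableEq ι] : DTree ι → Finset (Finset ι)
  | leaf _ => {∅}
  | node i L R => (pathVars L ∪ pathVars R).image (insert i)

/-- Fourier coefficient of (the ±1 version of) a decision tree. -/
noncomputable def fourierCoeff [Fintype ι] (T : DTree ι) (S : Finset ι) : ℝ :=
  (∑ x : ι → ZMod 2, T.evalpm x * chi S x) / Fintype.card (ι → ZMod 2)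

end DTree

theorem eq_of_sum_eq_of_forall_ne {ι M : Type*} [Fintype ι] [AddCancelCommMonoid M]
    {v w : ι → M} (j₀ : ι) (hne : ∀ j ≠ j₀, v j = w j) (hsum : ∑ j, v j = ∑ j, w j) :
    v = w := by
  funext j
  by_cases hj : j = j₀
  · subst hj
    rw [← add_sum_erase univ v (mem_univ j), ← add_sum_erase univ w (mem_univ j),
      sum_congr rfl fun i hi => hne i (ne_of_mem_erase hi)] at hsum
    exact add_right_cancel hsum
  · exact hne j hj

theorem card_sum_eq_and_eqOn_le {ι M : Type*} [Fintype ι] [DecidableEq ι] [AddCommGroup M]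
    [Fintype M] [DecidableEq M] (Q : Finset ι) (b : M) (r : ι → M) :
    #{v : ι → M | ∑ j, v j = b ∧ ∀ j ∈ Q, v j = r j} ≤ Fintype.card M ^ (#Qᶜ - 1) := by
  rcases Qᶜ.eq_empty_or_nonempty with hQ | ⟨j₀, hj₀⟩
  · rw [hQ, card_empty, Nat.zero_sub, pow_zero, card_le_one]
    rw [compl_eq_empty_iff] at hQ
    intro v hv w hw
    simp only [mem_filter, mem_univ, true_and, hQ] at hv hw
    exact funext fun j => (hv.2 j trivial).trans (hw.2 j trivial).symm
  · calc _ ≤ #(univ : Finset (Qᶜ.erase j₀ → M)) := by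
          refine card_le_card_of_injOn (fun v j => v j) (by simp) fun v hv w hw hvw => ?_
          simp only [coe_filter, mem_univ, true_and, Set.mem_ofPred_eq] at hv hw
          refine eq_of_sum_eq_of_forall_ne j₀ (fun j hj => ?_) (hv.1.trans hw.1.symm)
          by_cases hjQ : j ∈ Q
          · rw [hv.2 j hjQ, hw.2 j hjQ]
          · exact congrFun hvw ⟨j, mem_erase.2 ⟨hj, mem_compl.2 hjQ⟩⟩
      _ = _ := by rw [card_univ, Fintype.card_fun, Fintype.card_coe, card_erase_of_mem hj₀]

theorem natCast_sub_sub_one_add_mul_le {ℓ k : ℕ} (hk : k ≤ ℓ) :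
    ((ℓ - k - 1 : ℕ) : ℝ) + k * (1 - 1 / ℓ) ≤ ((ℓ - 1 : ℕ) : ℝ) := by
  rcases hk.lt_or_eq with hk | rfl
  · have : (0 : ℝ) ≤ k / ℓ := by positivity
    rw [Nat.cast_sub (by omega), Nat.cast_sub (by omega), Nat.cast_sub (by omega), mul_one_sub,
      mul_one_div]
    push_cast
    linarith
  · rcases Nat.eq_zero_or_pos k with rfl | hk
    · simp
    · rw [Nat.sub_self, Nat.cast_sub hk, mul_one_sub, mul_one_div_cancel (by positivity)]
      simp

theorem IsDist.sum_mul_le {α : Type*} [Fintype α] {μ : α → ℝ} (hμ : IsDist μ) {f : α → ℝ}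
    {B : ℝ} (hf : ∀ a, f a ≤ B) : ∑ a, μ a * f a ≤ B :=
  calc ∑ a, μ a * f a ≤ ∑ a, μ a * B :=
        sum_le_sum fun a _ => mul_le_mul_of_nonneg_left (hf a) (hμ.1 a)
    _ = B := by rw [← sum_mul, hμ.2, one_mul]

noncomputable def sliceAt {α β : Type*} [Fintype β] (R : Finset (α × β)) (a : α) : Finset β :=
  {b | (a, b) ∈ R}

theorem sum_card_sliceAt {α β : Type*} [Fintype α] [Fintype β] (R : Finset (α × β)) :
    ∑ a, #(sliceAt R a) = #R := by
  simp only [sliceAt, card_filter]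
  rw [← Fintype.sum_prod_type']
  simp

theorem card_parity_block_div_le {ℓ : ℕ} (Q : Finset (Fin ℓ)) (b : ZMod 2)
    (r : Fin ℓ → ZMod 2) :
    (#{v : Fin ℓ → ZMod 2 | ∑ j, v j = b ∧ ∀ j ∈ Q, v j = r j} : ℝ) / 2 ^ (ℓ - 1)
      ≤ (2 : ℝ) ^ (-(#Q : ℝ) * (1 - 1 / ℓ)) := by
  have hcard : #{v : Fin ℓ → ZMod 2 | ∑ j, v j = b ∧ ∀ j ∈ Q, v j = r j} ≤ 2 ^ (ℓ - #Q - 1) := by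
    -- `convert` only has to reconcile the decidability instances of the two filters
    convert card_sum_eq_and_eqOn_le Q b r using 4
    · exact (ZMod.card 2).symm
    · rw [card_compl, Fintype.card_fin]
  rw [div_le_iff₀ (by positivity), ← Real.rpow_natCast _ (ℓ - 1), ← Real.rpow_add two_pos]
  calc (#{v : Fin ℓ → ZMod 2 | ∑ j, v j = b ∧ ∀ j ∈ Q, v j = r j} : ℝ)
      ≤ (2 : ℝ) ^ ((ℓ - #Q - 1 : ℕ) : ℝ) := by rw [Real.rpow_natCast]; exact_mod_cast hcard
    _ ≤ _ := by
      gcongr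
      · norm_num
      · linarith [natCast_sub_sub_one_add_mul_le (card_le_univ Q |>.trans_eq (Fintype.card_fin ℓ))]

theorem card_fiber_blockPar {n ℓ : ℕ} (R : Finset (Fin n × Fin ℓ)) (r : Fin n × Fin ℓ → ZMod 2)
    (x : Fin n → ZMod 2) :
    #{y | (∀ p ∈ R, y p = r p) ∧ blockPar y = x}
      = ∏ i, #{v : Fin ℓ → ZMod 2 | ∑ j, v j = x i ∧ ∀ j ∈ sliceAt R i, v j = r (i, j)} := by
  rw [← Fintype.card_piFinset]
  refine card_nbij' Function.curry (fun f => Function.uncurry f) ?_ ?_ (fun _ _ => rfl)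
    (fun _ _ => rfl)
  · intro y hy
    simp only [Prod.forall, coe_filter, mem_univ, true_and, Set.mem_ofPred_eq, sliceAt,
      mem_filter, Fintype.coe_piFinset, Set.mem_pi, Set.mem_univ, Function.curry_apply,
      forall_const] at hy ⊢
    exact fun i => ⟨congrFun hy.2 i, fun j hj => hy.1 i j hj⟩
  · intro f hf
    simp only [sliceAt, mem_filter, mem_univ, true_and, Fintype.coe_piFinset, coe_filter,
      Set.mem_pi, Set.mem_univ, Set.mem_ofPred_eq, forall_const, Prod.forall,
      Function.uncurry_apply_pair] at hf ⊢
    exact ⟨fun i j hj => (hf i).2 j hj, funext fun i => (hf i).1⟩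

theorem card_fiber_blockPar_div_le {n ℓ : ℕ} (R : Finset (Fin n × Fin ℓ))
    (r : Fin n × Fin ℓ → ZMod 2) (x : Fin n → ZMod 2) :
    (#{y | (∀ p ∈ R, y p = r p) ∧ blockPar y = x} : ℝ) / 2 ^ ((ℓ - 1) * n)
      ≤ (2 : ℝ) ^ (-(#R : ℝ) * (1 - 1 / ℓ)) := by
  rw [card_fiber_blockPar, Nat.cast_prod, pow_mul, ← Fin.prod_const n ((2 : ℝ) ^ (ℓ - 1)),
    ← prod_div_distrib, ← sum_card_sliceAt R, Nat.cast_sum, ← sum_neg_distrib, sum_mul,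
    Real.rpow_sum_of_pos two_pos]
  exact prod_le_prod (fun i _ => by positivity) fun i _ => card_parity_block_div_le _ _ _

theorem pr_parSub {n ℓ : ℕ} (μ : (Fin n → ZMod 2) → ℝ) (E : (Fin n × Fin ℓ → ZMod 2) → Prop) :
    pr (parSub μ) E = ∑ x, μ x * (#{y | E y ∧ blockPar y = x} / 2 ^ ((ℓ - 1) * n)) := by
  rw [pr, ← sum_fiberwise _ blockPar]
  refine sum_congr rfl fun x _ => ?_
  rw [filter_filter, sum_congr rfl fun y hy => by rw [parSub, (mem_filter.1 hy).2.2], sum_const,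
    nsmul_eq_mul]
  ring

theorem stmt4_general {n ℓ : ℕ} (μ : (Fin n → ZMod 2) → ℝ) (hμ : IsDist μ)
    (R : Finset (Fin n × Fin ℓ)) (r : Fin n × Fin ℓ → ZMod 2) :
    pr (parSub μ) (fun y => ∀ p ∈ R, y p = r p)
      ≤ (2 : ℝ) ^ (-(R.card : ℝ) * (1 - 1 / (ℓ : ℝ))) := by
  rw [pr_parSub]
  refine hμ.sum_mul_le fun x => ?_
  convert card_fiber_blockPar_div_le R r x using 5

theorem stmt4 {n ℓ : ℕ} (hℓ : 2 ≤ ℓ) (μ : (Fin n → ZMod 2) → ℝ) (hμ : IsDist μ)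
    (R : Finset (Fin n × Fin ℓ)) (r : Fin n × Fin ℓ → ZMod 2) :
    pr (parSub μ) (fun y => ∀ p ∈ R, y p = r p)
      ≤ (2 : ℝ) ^ (-(R.card : ℝ) * (1 - 1 / (ℓ : ℝ))) :=
  stmt4_general μ hμ R r
end

section
/- Let g : 𝔽₂ⁿ → {−1,1}, 𝒟 a distribution on 𝔽₂ⁿ, ℓ ≥ 1, and S ⊆ [ℓn]. Call S block-complete if there exists S⋆ ⊆ [n] such that S is exactly the union of the full blocks indexed by S⋆. Define g_{⊕ℓ}(y) = g(BlockwisePar(y)) and 𝒟_{⊕ℓ} as the parity-substituted distribution. Then: if S is block-complete with underlying S⋆, Pr_{y∼𝒟_{⊕ℓ}}[g_{⊕ℓ}(y) = χ_S(y)] = Pr_{x∼𝒟}[g(x) = χ_{S⋆}(x)]; and if S is not block-complete, this probability equals 1/2. -/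
open Finset
open scoped Classical

/-! `blockPar` is a surjective 𝔽₂-linear map whose fibres all have `2 ^ ((ℓ - 1) * n)` points,
so under `parSub μ` the blockwise parity `blockPar y` is distributed as `μ`. If `S = S⋆ × [ℓ]`,
then `χ_S(y) = χ_{S⋆}(blockPar y)` and the agreement event only depends on `blockPar y`.
Otherwise some block `i` meets `S` in a proper nonempty subset; adding the vector with a `1` at one
position of block `i` inside `S` and one outside is a weight-preserving involution that fixes
`blockPar y` and negates `χ_S(y)`, so it exchanges agreement and disagreement. -/

noncomputable def signChar : AddChar (ZMod 2) ℝ := AddChar.zmodChar 2 neg_one_sq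

lemma signChar_sum {ι : Type*} (s : Finset ι) (f : ι → ZMod 2) :
    signChar (∑ i ∈ s, f i) = ∏ i ∈ s, signChar (f i) := by
  induction s using Finset.cons_induction with
  | empty => simp
  | cons a s ha ih => rw [sum_cons, prod_cons, AddChar.map_add_eq_mul, ih]

section chi

variable {ι : Type*} (S : Finset ι)

lemma chi_eq_prod_signChar (x : ι → ZMod 2) : chi S x = ∏ i ∈ S, signChar (x i) := rfl

lemma chi_add (x y : ι → ZMod 2) : chi S (x + y) = chi S x * chi S y := by
  simp only [chi_eq_prod_signChar, Pi.add_apply, AddChar.map_add_eq_mul, prod_mul_distrib]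

lemma chi_zero : chi S 0 = 1 := by
  simp [chi_eq_prod_signChar]

lemma chi_single [DecidableEq ι] (p : ι) :
    chi S (Pi.single p 1) = if p ∈ S then -1 else 1 := by
  simp [chi, Pi.single_apply, apply_ite (fun a : ZMod 2 => (-1 : ℝ) ^ a.val),
    show (1 : ZMod 2).val = 1 from rfl]

lemma chi_eq_one_or_neg_one (x : ι → ZMod 2) : chi S x = 1 ∨ chi S x = -1 := by
  rw [← mul_self_eq_one_iff, ← chi_add, ZModModule.add_self, chi_zero]

end chi

lemma chi_product_univ {n ℓ : ℕ} (T : Finset (Fin n)) (y : Fin n × Fin ℓ → ZMod 2) :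
    chi (T ×ˢ univ) y = chi T (blockPar y) := by
  simp only [chi_eq_prod_signChar, prod_product, blockPar, signChar_sum]

theorem AddMonoidHom.card_nsmul_sum_comp_of_surjective {G H M : Type*} [AddGroup G] [Fintype G]
    [AddMonoid H] [Fintype H] [DecidableEq H] [AddCommMonoid M] (φ : G →+ H)
    (hφ : Function.Surjective φ) (f : H → M) :
    Fintype.card H • ∑ g, f (φ g) = Fintype.card G • ∑ h, f h := by
  have hfiber (h : H) : #{g | φ g = h} = #{g | φ g = 0} :=
    AddMonoidHom.card_fiber_eq_of_mem_range φ (hφ h) (hφ 0)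
  have hsum : ∑ g, f (φ g) = #{g | φ g = 0} • ∑ h, f h := by
    rw [sum_comp, image_univ_of_surjective hφ, smul_sum]
    simp only [hfiber]
  have hcard : Fintype.card G = Fintype.card H * #{g | φ g = 0} := by
    rw [← card_univ, card_eq_sum_card_fiberwise (fun g _ => mem_univ (φ g))]
    simp only [hfiber, sum_const, card_univ, smul_eq_mul]
  rw [hsum, hcard, mul_smul]

section blockPar

variable {n ℓ : ℕ}

def blockParHom : (Fin n × Fin ℓ → ZMod 2) →+ (Fin n → ZMod 2) where
  toFun := blockPar
  map_zero' := by ext; simp [blockPar]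
  map_add' x y := by ext; simp [blockPar, sum_add_distrib]

lemma blockPar_add (x y : Fin n × Fin ℓ → ZMod 2) :
    blockPar (x + y) = blockPar x + blockPar y :=
  blockParHom.map_add x y

lemma blockPar_single (i : Fin n) (j : Fin ℓ) (a : ZMod 2) :
    blockPar (Pi.single (i, j) a) = Pi.single i a := by
  ext k
  by_cases hk : k = i
  · subst hk; simp [blockPar, Pi.single_apply]
  · simp [blockPar, hk]

lemma blockPar_surjective (hℓ : 0 < ℓ) :
    Function.Surjective (blockPar : (Fin n × Fin ℓ → ZMod 2) → Fin n → ZMod 2) := fun x =>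
  ⟨∑ i, Pi.single (i, ⟨0, hℓ⟩) (x i), by
    change blockParHom _ = x
    simp only [map_sum]
    exact (sum_congr rfl fun i _ => blockPar_single _ _ _).trans (univ_sum_single x)⟩

lemma sum_comp_blockPar (hℓ : 0 < ℓ) (F : (Fin n → ZMod 2) → ℝ) :
    ∑ y : Fin n × Fin ℓ → ZMod 2, F (blockPar y) = 2 ^ ((ℓ - 1) * n) * ∑ x, F x := by
  have h := blockParHom.card_nsmul_sum_comp_of_surjective (blockPar_surjective hℓ) F
  have hexp : n * ℓ = n + (ℓ - 1) * n := by
    obtain ⟨k, rfl⟩ := Nat.exists_eq_add_one_of_ne_zero hℓ.ne'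
    rw [Nat.add_sub_cancel]
    ring
  simp only [Fintype.card_fun, Fintype.card_prod, Fintype.card_fin, ZMod.card, nsmul_eq_mul,
    hexp, pow_add, Nat.cast_mul, Nat.cast_pow, Nat.cast_ofNat, mul_assoc] at h
  exact mul_left_cancel₀ (by positivity) h

end blockPar

lemma pr_parSub_comp_blockPar {n ℓ : ℕ} (hℓ : 0 < ℓ) (μ : (Fin n → ZMod 2) → ℝ)
    (P : (Fin n → ZMod 2) → Prop) :
    pr (parSub μ) (fun y : Fin n × Fin ℓ → ZMod 2 => P (blockPar y)) = pr μ P := by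
  have hterm (y : Fin n × Fin ℓ → ZMod 2) : (if P (blockPar y) then parSub μ y else 0)
      = (if P (blockPar y) then μ (blockPar y) else 0) / 2 ^ ((ℓ - 1) * n) := by
    split_ifs <;> simp [parSub]
  simp only [pr, sum_filter, hterm, ← sum_div,
    sum_comp_blockPar hℓ (fun x => if P x then μ x else 0)]
  exact mul_div_cancel_left₀ _ (by positivity)

lemma sum_parSub {n ℓ : ℕ} (hℓ : 0 < ℓ) {μ : (Fin n → ZMod 2) → ℝ} (hμ : ∑ x, μ x = 1) :
    ∑ y : Fin n × Fin ℓ → ZMod 2, parSub μ y = 1 := by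
  simpa [pr, hμ] using pr_parSub_comp_blockPar hℓ μ (fun _ => True)

lemma pr_eq_half_of_equiv {α : Type*} [Fintype α] (w : α → ℝ) (P : α → Prop) (σ : α ≃ α)
    (hw : ∀ a, w (σ a) = w a) (hP : ∀ a, P (σ a) ↔ ¬ P a) :
    pr w P = (∑ a, w a) / 2 := by
  have hcompl : pr w P = pr w (fun a => ¬ P a) := by
    simp only [pr, sum_filter]
    rw [← σ.sum_comp]
    simp only [hw, hP]
    congr! 2
  have htotal : pr w P + pr w (fun a => ¬ P a) = ∑ a, w a := by
    unfold pr
    convert sum_filter_add_sum_filter_not univ P w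
  linarith

lemma Finset.eq_image_fst_product_univ {α β : Type*} [DecidableEq α] [Fintype β]
    {S : Finset (α × β)} (h : ∀ i j j', (i, j) ∈ S → (i, j') ∈ S) :
    S = S.image Prod.fst ×ˢ univ := by
  ext ⟨i, j⟩
  simp only [mem_product, mem_image, mem_univ, and_true, Prod.exists, exists_and_right,
    exists_eq_right]
  exact ⟨fun hij => ⟨j, hij⟩, fun ⟨j', hij'⟩ => h i j' j hij'⟩

theorem stmt6 {n ℓ : ℕ} (hℓ : 1 ≤ ℓ) (μ : (Fin n → ZMod 2) → ℝ) (hμ : IsDist μ)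
    (g : (Fin n → ZMod 2) → ℝ) (hg : ∀ x, g x = 1 ∨ g x = -1)
    (S : Finset (Fin n × Fin ℓ)) :
    (∀ Sstar : Finset (Fin n), S = Sstar ×ˢ Finset.univ →
      pr (parSub μ) (fun y => g (blockPar y) = chi S y)
        = pr μ (fun x => g x = chi Sstar x)) ∧
    ((¬ ∃ Sstar : Finset (Fin n), S = Sstar ×ˢ Finset.univ) →
      pr (parSub μ) (fun y => g (blockPar y) = chi S y) = 1 / 2) := by
  refine ⟨fun T hS => ?_, fun hS => ?_⟩
  · subst hS
    simp only [chi_product_univ]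
    exact pr_parSub_comp_blockPar hℓ μ (fun x => g x = chi T x)
  · obtain ⟨i, j₁, j₂, h₁, h₂⟩ : ∃ i j₁ j₂, (i, j₁) ∈ S ∧ (i, j₂) ∉ S := by
      by_contra! h
      exact hS ⟨_, eq_image_fst_product_univ h⟩
    set e : Fin n × Fin ℓ → ZMod 2 := Pi.single (i, j₁) 1 + Pi.single (i, j₂) 1
    have he_blockPar : blockPar e = 0 := by
      rw [blockPar_add, blockPar_single, blockPar_single, ZModModule.add_self]
    have he_chi : chi S e = -1 := by
      rw [chi_add, chi_single, chi_single, if_pos h₁, if_neg h₂, mul_one]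
    rw [pr_eq_half_of_equiv _ _ (Equiv.addRight e), sum_parSub hℓ hμ.2]
    · intro y
      simp only [parSub, Equiv.coe_addRight, blockPar_add, he_blockPar, add_zero]
    · intro y
      simp only [Equiv.coe_addRight, blockPar_add, he_blockPar, add_zero, chi_add, he_chi,
        mul_neg_one]
      rcases hg (blockPar y) with h | h <;> rcases chi_eq_one_or_neg_one S y with h' | h' <;>
        rw [h, h'] <;> norm_num
end

section
/- Let 𝒟 be a distribution on 𝔽₂ⁿ and g : 𝔽₂ⁿ → 𝔽₂. If g agrees 𝒟-almost surely with a parity χ_S with |S| ≤ k, then g_{⊕ℓ} agrees 𝒟_{⊕ℓ}-almost surely with a parity on at most kℓ coordinates of (𝔽₂^ℓ)ⁿ, namely the parity over the union of the blocks indexed by S. -/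
open Finset
open scoped Classical

lemma pr_eq_zero_iff {α : Type*} [Fintype α] {μ : α → ℝ} (hμ : ∀ a, 0 ≤ μ a) {P : α → Prop} :
    pr μ P = 0 ↔ ∀ a, P a → μ a = 0 := by
  rw [pr, sum_eq_zero_iff_of_nonneg fun a _ => hμ a]
  simp only [mem_filter, mem_univ, true_and]

lemma pr_parSub_comp_blockPar_eq_zero {n ℓ : ℕ} {μ : (Fin n → ZMod 2) → ℝ} (hμ : ∀ x, 0 ≤ μ x)
    {P : (Fin n → ZMod 2) → Prop} (hP : pr μ P = 0) :
    pr (parSub μ) (fun y : Fin n × Fin ℓ → ZMod 2 => P (blockPar y)) = 0 := by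
  have hparSub : ∀ y : Fin n × Fin ℓ → ZMod 2, 0 ≤ parSub μ y :=
    fun y => div_nonneg (hμ _) (by positivity)
  rw [pr_eq_zero_iff hμ] at hP
  rw [pr_eq_zero_iff hparSub]
  intro y hy
  rw [parSub, hP _ hy, zero_div]

lemma chi2_product_univ {n ℓ : ℕ} (S : Finset (Fin n)) (y : Fin n × Fin ℓ → ZMod 2) :
    chi2 (S ×ˢ univ) y = chi2 S (blockPar y) :=
  sum_product S univ y

theorem stmt11 {n : ℕ} (ℓ : ℕ) (μ : (Fin n → ZMod 2) → ℝ) (hμ : IsDist μ)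
    (g : (Fin n → ZMod 2) → ZMod 2) (k : ℕ) (S : Finset (Fin n)) (hS : S.card ≤ k)
    (hag : pr μ (fun x => g x ≠ chi2 S x) = 0) :
    (S ×ˢ (Finset.univ : Finset (Fin ℓ))).card ≤ k * ℓ ∧
    pr (parSub μ) (fun y : Fin n × Fin ℓ → ZMod 2 =>
      g (blockPar y) ≠ chi2 (S ×ˢ Finset.univ) y) = 0 := by
  refine ⟨?_, ?_⟩
  · rw [card_product, card_univ, Fintype.card_fin]
    exact Nat.mul_le_mul_right ℓ hS
  · simp only [chi2_product_univ]
    exact pr_parSub_comp_blockPar_eq_zero hμ.1 hag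
end
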